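/- arXiv:1008.4560 — 2 statements merged into one kernel-verified Lean document; each statement's English description precedes it below -/
import Mathlib

section
/- Let p ∈ ℂ[z] have degree d with reflection p̃(z) = z^d·conj(p(1/conj(z))), and suppose A(z) = ∑_{j=0}^{d−1} A_j z^j is a ℂ^N-valued vector polynomial such that |p(z)|² − |p̃(z)|² = (1 − |z|²)·|A(z)|² for all z ∈ ℂ. Then |A(z)|² = |z|^{2(d−1)}·|A(1/conj(z))|² for all z ≠ 0, and consequently ⟨A_j, A_k⟩ = ⟨A_{d−1−k}, A_{d−1−j}⟩ for all 0 ≤ j, k ≤ d−1. -/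
/-! Evaluating the hypothesis at `z` and at `(conj z)⁻¹`, and using
`|p̃(z)| = |z|^d |p((conj z)⁻¹)|` and `|p(z)| = |z|^d |p̃((conj z)⁻¹)|`, gives the reflection
identity for `|A|²` off the unit circle. Both of its sides are polynomials in `z` and `conj z`,
with coefficients `⟨A_k, A_j⟩` and `⟨A_{d-1-j}, A_{d-1-k}⟩`. Such a polynomial vanishing outside
finitely many circles has zero coefficients: along rays `t * w` its homogeneous parts vanish, and
on the unit circle, where `conj w = w⁻¹`, a homogeneous part is a polynomial in `w` alone. So the
coefficients agree, which is the inner-product symmetry, and the reflection identity then holds at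
every `z ≠ 0`. -/

open Complex ComplexConjugate Finset Polynomial

theorem sphere_zero_one_infinite : (Metric.sphere (0 : ℂ) 1).Infinite :=
  (isPreconnected_sphere (by simp) 0 1).infinite_of_nontrivial
    ⟨1, by simp, -1, by simp, by norm_num⟩

def sesqPoly (n : ℕ) (M : ℕ → ℕ → ℂ) (z : ℂ) : ℂ :=
  ∑ j ∈ range n, ∑ k ∈ range n, M j k * (z ^ j * conj z ^ k)

theorem sum_homogeneous_eq_zero_of_infinite {n : ℕ} {M : ℕ → ℕ → ℂ} {w : ℂ}
    (h : {t : ℝ | sesqPoly n M (t * w) = 0}.Infinite) (m : ℕ) :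
    ∑ j ∈ range n, ∑ k ∈ range n,
      (if j + k = m then M j k * (w ^ j * conj w ^ k) else 0) = 0 := by
  set q : ℂ[X] := ∑ j ∈ range n, ∑ k ∈ range n, C (M j k * (w ^ j * conj w ^ k)) * X ^ (j + k)
  have hq : q = 0 := by
    refine eq_zero_of_infinite_isRoot q ((h.image ofReal_injective.injOn).mono ?_)
    rintro _ ⟨t, ht, rfl⟩
    refine (?_ : q.eval (t : ℂ) = sesqPoly n M (t * w)).trans ht
    simp only [q, sesqPoly, eval_finsetSum, eval_mul, eval_C, eval_pow, eval_X, map_mul,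
      conj_ofReal, mul_pow]
    exact sum_congr rfl fun j _ => sum_congr rfl fun k _ => by ring
  simpa only [q, finsetSum_coeff, coeff_C_mul_X_pow, coeff_zero, eq_comm (a := m)] using
    congrArg (coeff · m) hq

theorem coeff_eq_zero_of_sum_homogeneous_eq_zero {n : ℕ} {M : ℕ → ℕ → ℂ} {j₀ k₀ : ℕ}
    (hj₀ : j₀ < n) (hk₀ : k₀ < n)
    (h : ∀ w ∈ Metric.sphere (0 : ℂ) 1, ∑ j ∈ range n, ∑ k ∈ range n,
      (if j + k = j₀ + k₀ then M j k * (w ^ j * conj w ^ k) else 0) = 0) :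
    M j₀ k₀ = 0 := by
  set r : ℂ[X] := ∑ j ∈ range n, ∑ k ∈ range n,
    C (if j + k = j₀ + k₀ then M j k else 0) * X ^ (2 * j)
  -- on the unit circle `conj w = w⁻¹`, so `w ^ (j + k)` times the homogeneous part is `r.eval w`
  have hr : r = 0 := by
    refine eq_zero_of_infinite_isRoot r (sphere_zero_one_infinite.mono fun w hw => ?_)
    have hw1 : conj w * w = 1 := by
      rw [mul_comm, mul_conj, normSq_eq_norm_sq, mem_sphere_zero_iff_norm.mp hw]; norm_num
    rw [Set.mem_ofPred_eq, IsRoot, ← mul_zero (w ^ (j₀ + k₀)), ← h w hw, mul_sum]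
    simp only [r, eval_finsetSum, eval_mul, eval_C, eval_pow, eval_X, mul_sum]
    refine sum_congr rfl fun j _ => sum_congr rfl fun k _ => ?_
    split_ifs with hjk
    · have hwk : conj w ^ k * w ^ k = 1 := by rw [← mul_pow, hw1, one_pow]
      rw [← hjk]
      linear_combination (-(M j k * w ^ (2 * j))) * hwk
    · simp
  have hcoeff := congrArg (coeff · (2 * j₀)) hr
  simp only [r, finsetSum_coeff, coeff_C_mul_X_pow, coeff_zero] at hcoeff
  rw [sum_eq_single j₀ (fun j _ hj => by simp [show 2 * j₀ ≠ 2 * j by omega])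
      (fun h => absurd (mem_range.mpr hj₀) h),
    sum_eq_single k₀ (fun k _ hk => by simp [hk])
      (fun h => absurd (mem_range.mpr hk₀) h)] at hcoeff
  simpa using hcoeff

theorem coeff_eq_zero_of_sesqPoly_eq_zero {n : ℕ} {M : ℕ → ℕ → ℂ} {s : Set ℝ} (hs : s.Finite)
    (h : ∀ z : ℂ, ‖z‖ ∉ s → sesqPoly n M z = 0) {j k : ℕ} (hj : j < n) (hk : k < n) :
    M j k = 0 := by
  refine coeff_eq_zero_of_sum_homogeneous_eq_zero hj hk fun w hw =>
    sum_homogeneous_eq_zero_of_infinite (((Set.Ioi_infinite 0).sdiff hs).mono ?_) _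
  rintro t ⟨ht, hts⟩
  refine h _ ?_
  rwa [norm_mul, norm_real, mem_sphere_zero_iff_norm.mp hw, mul_one, Real.norm_of_nonneg ht.le]

theorem coeff_eq_of_sesqPoly_eq {n : ℕ} {M M' : ℕ → ℕ → ℂ} {s : Set ℝ} (hs : s.Finite)
    (h : ∀ z : ℂ, ‖z‖ ∉ s → sesqPoly n M z = sesqPoly n M' z) {j k : ℕ} (hj : j < n)
    (hk : k < n) : M j k = M' j k := by
  refine sub_eq_zero.mp <| coeff_eq_zero_of_sesqPoly_eq_zero (M := fun j k => M j k - M' j k) hs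
    (fun z hz => ?_) hj hk
  simp only [sesqPoly, sub_mul, sum_sub_distrib]
  exact sub_eq_zero.mpr (h z hz)

theorem norm_sum_pow_smul_sq {E : Type*} [NormedAddCommGroup E] [InnerProductSpace ℂ E]
    (n : ℕ) (A : ℕ → E) (z : ℂ) :
    (‖∑ j ∈ range n, z ^ j • A j‖ : ℂ) ^ 2 = sesqPoly n (fun j k => inner ℂ (A k) (A j)) z := by
  have hinner : (‖∑ j ∈ range n, z ^ j • A j‖ : ℂ) ^ 2 =
      inner ℂ (∑ j ∈ range n, z ^ j • A j) (∑ j ∈ range n, z ^ j • A j) := by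
    rw [inner_self_eq_norm_sq_to_K]; norm_cast
  rw [hinner, sum_inner, sesqPoly, sum_comm]
  refine sum_congr rfl fun j _ => ?_
  rw [inner_sum]
  refine sum_congr rfl fun k _ => ?_
  rw [inner_smul_left, inner_smul_right, map_pow]
  ring

theorem sesqPoly_inv_conj {n : ℕ} (M : ℕ → ℕ → ℂ) {z : ℂ} (hz : z ≠ 0) :
    (‖z‖ : ℂ) ^ (2 * (n - 1)) * sesqPoly n M (conj z)⁻¹ =
      sesqPoly n (fun j k => M (n - 1 - k) (n - 1 - j)) z := by
  have hz' : conj z ≠ 0 := (_root_.map_ne_zero _).mpr hz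
  rw [pow_mul, ← ofReal_pow, ← normSq_eq_norm_sq, ← mul_conj, sesqPoly, sesqPoly, eq_comm,
    ← sum_range_reflect, sum_comm, ← sum_range_reflect, mul_sum]
  refine sum_congr rfl fun j hj => ?_
  rw [mul_sum]
  refine sum_congr rfl fun k hk => ?_
  rw [mem_range] at hj hk
  rw [map_inv₀, conj_conj, Nat.sub_sub_self (by omega), Nat.sub_sub_self (by omega), mul_pow,
    ← pow_sub_mul_pow z (show k ≤ n - 1 by omega),
    ← pow_sub_mul_pow (conj z) (show j ≤ n - 1 by omega), inv_pow, inv_pow]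
  field_simp

theorem norm_sum_conj_reflect (d : ℕ) (c : ℕ → ℂ) {z : ℂ} (hz : z ≠ 0) :
    ‖∑ j ∈ range (d + 1), conj (c (d - j)) * z ^ j‖ =
      ‖z‖ ^ d * ‖∑ j ∈ range (d + 1), c j * (conj z)⁻¹ ^ j‖ := by
  have h : ∑ j ∈ range (d + 1), conj (c (d - j)) * z ^ j =
      z ^ d * conj (∑ j ∈ range (d + 1), c j * (conj z)⁻¹ ^ j) := by
    rw [map_sum, mul_sum, ← sum_range_reflect]
    refine sum_congr rfl fun j hj => ?_
    rw [mem_range] at hj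
    rw [add_tsub_cancel_right, Nat.sub_sub_self (by omega), map_mul, map_pow, map_inv₀, conj_conj,
      ← pow_sub_mul_pow z (show j ≤ d by omega), inv_pow]
    field_simp
  rw [h, norm_mul, norm_pow, Complex.norm_conj]

section ChristoffelDarboux

variable {E : Type*} [NormedAddCommGroup E] [InnerProductSpace ℂ E]

def ChristoffelDarbouxIdentity (d : ℕ) (c : ℕ → ℂ) (A : ℕ → E) : Prop :=
  ∀ z : ℂ,
    ‖∑ j ∈ range (d + 1), c j * z ^ j‖ ^ 2 - ‖∑ j ∈ range (d + 1), conj (c (d - j)) * z ^ j‖ ^ 2 =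
      (1 - ‖z‖ ^ 2) * ‖∑ j ∈ range d, z ^ j • A j‖ ^ 2

namespace ChristoffelDarbouxIdentity

variable {d : ℕ} {c : ℕ → ℂ} {A : ℕ → E}

theorem norm_sq_eq_of_norm_ne_one (hCD : ChristoffelDarbouxIdentity d c A) {z : ℂ} (hz : z ≠ 0)
    (hz1 : ‖z‖ ≠ 1) :
    ‖∑ j ∈ range d, z ^ j • A j‖ ^ 2 =
      ‖z‖ ^ (2 * (d - 1)) * ‖∑ j ∈ range d, (conj z)⁻¹ ^ j • A j‖ ^ 2 := by
  have hq := norm_sum_conj_reflect d c hz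
  have hp : ‖∑ j ∈ range (d + 1), c j * z ^ j‖ =
      ‖z‖ ^ d * ‖∑ j ∈ range (d + 1), conj (c (d - j)) * (conj z)⁻¹ ^ j‖ := by
    rw [← norm_sum_conj_reflect d (fun j => conj (c (d - j))) hz]
    refine congrArg _ (sum_congr rfl fun j hj => ?_)
    rw [conj_conj, Nat.sub_sub_self (by simpa [Nat.lt_succ_iff] using hj)]
  have hw := hCD (conj z)⁻¹
  rw [norm_inv, Complex.norm_conj] at hw
  have hr1 : 1 - ‖z‖ ^ 2 ≠ 0 := fun h =>
    hz1 ((pow_eq_one_iff_of_nonneg (norm_nonneg z) two_ne_zero).mp (by linarith))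
  have hrr : ‖z‖ * ‖z‖⁻¹ = 1 := mul_inv_cancel₀ (norm_ne_zero_iff.mpr hz)
  obtain _ | e := d
  · simp
  refine mul_left_cancel₀ hr1 ?_
  rw [← hCD z, hp, hq, add_tsub_cancel_right]
  linear_combination (-‖z‖ ^ (2 * e + 2)) * hw +
    ‖z‖ ^ (2 * e) * ‖∑ j ∈ range (e + 1), (conj z)⁻¹ ^ j • A j‖ ^ 2 * (‖z‖ * ‖z‖⁻¹ + 1) * hrr

theorem inner_eq_inner_reflect (hCD : ChristoffelDarbouxIdentity d c A) {j k : ℕ} (hj : j < d)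
    (hk : k < d) :
    inner ℂ (A k) (A j) = inner ℂ (A (d - 1 - j)) (A (d - 1 - k)) := by
  refine coeff_eq_of_sesqPoly_eq (M := fun j k => inner ℂ (A k) (A j))
    (M' := fun j k => inner ℂ (A (d - 1 - j)) (A (d - 1 - k))) (Set.toFinite {0, 1})
    (fun z hz => ?_) hj hk
  simp only [Set.mem_insert_iff, Set.mem_singleton_iff, norm_eq_zero, not_or] at hz
  rw [← norm_sum_pow_smul_sq, ← sesqPoly_inv_conj (fun j k => inner ℂ (A k) (A j)) hz.1,
    ← norm_sum_pow_smul_sq]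
  exact_mod_cast congrArg ((↑) : ℝ → ℂ) (hCD.norm_sq_eq_of_norm_ne_one hz.1 hz.2)

theorem norm_sq_eq_norm_pow_mul_norm_sq (hCD : ChristoffelDarbouxIdentity d c A) {z : ℂ}
    (hz : z ≠ 0) :
    ‖∑ j ∈ range d, z ^ j • A j‖ ^ 2 =
      ‖z‖ ^ (2 * (d - 1)) * ‖∑ j ∈ range d, (conj z)⁻¹ ^ j • A j‖ ^ 2 := by
  refine ofReal_injective ?_
  push_cast
  rw [norm_sum_pow_smul_sq, norm_sum_pow_smul_sq, sesqPoly_inv_conj _ hz]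
  exact sum_congr rfl fun j hj => sum_congr rfl fun k hk =>
    congrArg (· * _) (hCD.inner_eq_inner_reflect (mem_range.mp hj) (mem_range.mp hk))

end ChristoffelDarbouxIdentity

end ChristoffelDarboux

theorem stmt16_general (d N : ℕ) (hd : 1 ≤ d) (c : ℕ → ℂ)
    (Ac : ℕ → EuclideanSpace ℂ (Fin N))
    (hCD : ∀ z : ℂ,
      ‖∑ j ∈ Finset.range (d + 1), c j * z ^ j‖ ^ 2 -
          ‖∑ j ∈ Finset.range (d + 1), conj (c (d - j)) * z ^ j‖ ^ 2 =
        (1 - ‖z‖ ^ 2) * ‖∑ j ∈ Finset.range d, z ^ j • Ac j‖ ^ 2) :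
    (∀ z : ℂ, z ≠ 0 →
      ‖∑ j ∈ Finset.range d, z ^ j • Ac j‖ ^ 2 =
        ‖z‖ ^ (2 * (d - 1)) *
          ‖∑ j ∈ Finset.range d, ((conj z)⁻¹) ^ j • Ac j‖ ^ 2) ∧
    (∀ j k : ℕ, j ≤ d - 1 → k ≤ d - 1 →
      (inner ℂ (Ac k) (Ac j) : ℂ) = inner ℂ (Ac (d - 1 - j)) (Ac (d - 1 - k))) := by
  have h : ChristoffelDarbouxIdentity d c Ac := hCD
  exact ⟨fun _ hz => h.norm_sq_eq_norm_pow_mul_norm_sq hz,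
    fun _ _ hj hk => h.inner_eq_inner_reflect (by omega) (by omega)⟩

/-- if `p(z) = ∑_{j=0}^d p_j z^j` has degree `d`,
`p̃(z) = ∑_{j=0}^d conj(p_{d−j}) z^j`, and `A(z) = ∑_{j=0}^{d−1} A_j z^j` is a
`ℂ^N`-valued polynomial with `|p(z)|² − |p̃(z)|² = (1 − |z|²)|A(z)|²` for all `z`, then
`|A(z)|² = |z|^{2(d−1)} |A(1/conj z)|²` for `z ≠ 0`, and
`⟨A_j, A_k⟩ = ⟨A_{d−1−k}, A_{d−1−j}⟩` for `0 ≤ j, k ≤ d−1`. -/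
theorem stmt16 (d N : ℕ) (hd : 1 ≤ d) (c : ℕ → ℂ) (hcd : c d ≠ 0)
    (Ac : ℕ → EuclideanSpace ℂ (Fin N))
    (hCD : ∀ z : ℂ,
      ‖∑ j ∈ Finset.range (d + 1), c j * z ^ j‖ ^ 2 -
          ‖∑ j ∈ Finset.range (d + 1), conj (c (d - j)) * z ^ j‖ ^ 2 =
        (1 - ‖z‖ ^ 2) * ‖∑ j ∈ Finset.range d, z ^ j • Ac j‖ ^ 2) :
    (∀ z : ℂ, z ≠ 0 →
      ‖∑ j ∈ Finset.range d, z ^ j • Ac j‖ ^ 2 =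
        ‖z‖ ^ (2 * (d - 1)) *
          ‖∑ j ∈ Finset.range d, ((conj z)⁻¹) ^ j • Ac j‖ ^ 2) ∧
    (∀ j k : ℕ, j ≤ d - 1 → k ≤ d - 1 →
      (inner ℂ (Ac k) (Ac j) : ℂ) = inner ℂ (Ac (d - 1 - j)) (Ac (d - 1 - k))) :=
  stmt16_general d N hd c Ac hCD
end

section
/- Let p ∈ ℂ[z_1,z_2,z_3] be multi-affine and stable, written p = a(z_1,z_2) + b(z_1,z_2)·z_3, and let ã, b̃ denote the bidegree-(1,1) reflections of a, b. Let E_1, E_2 ∈ ℂ[z_1,z_2] be polynomials of degree at most one in each variable satisfying |E_1(z_1,z_2)|² + |E_2(z_1,z_2)|² = |a(z_1,z_2)|² − |b(z_1,z_2)|² for all (z_1,z_2) ∈ 𝕋², and let E = (E_1,E_2)ᵗ, Ẽ = (Ẽ_1,Ẽ_2)ᵗ be the column vectors of these polynomials and their bidegree-(1,1) reflections. Define the 3×3 matrix-valued function V = (1/a)·[[b̃, Ẽᵗ],[E, (E·Ẽᵗ − a(ã + b)·I_2)/(a + b̃)]] (block structure: top-left 1×1 entry b̃, top-right 1×2 row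 Ẽᵗ, bottom-left 2×1 column E, bottom-right 2×2 block (E·Ẽᵗ − a(ã + b)I_2)/(a + b̃)). Then V is holomorphic on the open bidisk 𝔻² and V(z_1,z_2) is a unitary 3×3 matrix for every (z_1,z_2) ∈ 𝕋². -/
open MvPolynomial Complex ComplexConjugate Finset

noncomputable section

/-- A polynomial is *stable* if it has no zeros on the closed unit polydisk. -/
def IsStable {n : ℕ} (p : MvPolynomial (Fin n) ℂ) : Prop :=
  ∀ z : Fin n → ℂ, (∀ i, ‖z i‖ ≤ 1) → eval z p ≠ 0

/-- `pt` is the reflection of the multi-affine polynomial `p`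
(at multidegree `(1,…,1)`):  `p̃(z) = z₁⋯zₙ · conj (p (1/conj z₁, …, 1/conj zₙ))`. -/
def IsReflection {n : ℕ} (p pt : MvPolynomial (Fin n) ℂ) : Prop :=
  ∀ z : Fin n → ℂ, (∀ i, z i ≠ 0) →
    eval z pt = (∏ i, z i) * conj (eval (fun i => (conj (z i))⁻¹) p)

/-- `qt` is the reflection of `q ∈ ℂ[z₁,z₂]` at bidegree `(1,1)`:
`q̃(z₁,z₂) = z₁ z₂ · conj (q (1/conj z₁, 1/conj z₂))`. -/
def IsReflection2 (q qt : MvPolynomial (Fin 2) ℂ) : Prop :=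
  ∀ z1 z2 : ℂ, z1 ≠ 0 → z2 ≠ 0 →
    eval ![z1, z2] qt = z1 * z2 * conj (eval ![(conj z1)⁻¹, (conj z2)⁻¹] q)

/-!
Stability of `p = a + b z₃` gives `|b| < |a|` on the closed bidisk, since otherwise
`z₃ = -a/b` would be a zero of `p` there. On the torus `|b̃| = |b|`, so the maximum modulus
principle in each variable gives `|b̃| < |a|` on the closed bidisk: `a` and `a + b̃` have no
zeros there and `V` is holomorphic. On the torus every reflection is `q̃ = z₁ z₂ q̄`, and after
this substitution each entry of `V* V = I` is a multiple of
`|E₁|² + |E₂|² - |a|² + |b|² = 0`.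
-/

open Metric
open scoped Matrix

lemma differentiable_eval_pair (q : MvPolynomial (Fin 2) ℂ) :
    Differentiable ℂ (fun w : ℂ × ℂ => eval ![w.1, w.2] q) := fun _ =>
  (AnalyticAt.aeval_mvPolynomial (f := fun w : ℂ × ℂ => ![w.1, w.2])
    (Fin.forall_fin_two.2 ⟨analyticAt_fst, analyticAt_snd⟩) q).differentiableAt

lemma IsReflection2.eval_eq_of_norm_eq_one {q qt : MvPolynomial (Fin 2) ℂ}
    (hq : IsReflection2 q qt) {z1 z2 : ℂ} (h1 : ‖z1‖ = 1) (h2 : ‖z2‖ = 1) :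
    eval ![z1, z2] qt = z1 * z2 * conj (eval ![z1, z2] q) := by
  have hinv {z : ℂ} (hz : ‖z‖ = 1) : (conj z)⁻¹ = z := by
    rw [← map_inv₀, inv_eq_conj hz, conj_conj]
  rw [hq z1 z2 (norm_ne_zero_iff.1 (by simp [h1])) (norm_ne_zero_iff.1 (by simp [h2])),
    hinv h1, hinv h2]

lemma norm_lt_norm_of_forall_add_mul_ne_zero {x y : ℂ}
    (h : ∀ w : ℂ, ‖w‖ ≤ 1 → x + y * w ≠ 0) : ‖y‖ < ‖x‖ := by
  by_contra! hxy
  rcases eq_or_ne y 0 with rfl | hy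
  · exact h 0 (by simp) (by simpa using hxy)
  · refine h (-(x / y)) ?_ (by field_simp; ring)
    rw [norm_neg, norm_div]
    exact div_le_one_of_le₀ hxy (norm_nonneg y)

lemma IsStable.norm_eval_lt_norm_eval {p : MvPolynomial (Fin 3) ℂ}
    {a b : MvPolynomial (Fin 2) ℂ} (hst : IsStable p)
    (hp : ∀ z : Fin 3 → ℂ, eval z p = eval ![z 0, z 1] a + eval ![z 0, z 1] b * z 2)
    {z1 z2 : ℂ} (h1 : ‖z1‖ ≤ 1) (h2 : ‖z2‖ ≤ 1) : ‖eval ![z1, z2] b‖ < ‖eval ![z1, z2] a‖ :=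
  norm_lt_norm_of_forall_add_mul_ne_zero fun w hw => by
    simpa [hp] using hst ![z1, z2, w] (by simp [Fin.forall_fin_succ, h1, h2, hw])

lemma norm_le_of_forall_norm_eq_one_norm_le {f : ℂ → ℂ} {M : ℝ}
    (hf : DifferentiableOn ℂ f (closedBall 0 1)) (hM : ∀ z : ℂ, ‖z‖ = 1 → ‖f z‖ ≤ M)
    {z : ℂ} (hz : ‖z‖ ≤ 1) : ‖f z‖ ≤ M := by
  refine Complex.norm_le_of_forall_mem_frontier_norm_le (isBounded_ball (x := 0) (r := 1))
    (DifferentiableOn.diffContOnCl ?_) (fun w hw => hM w ?_) ?_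
  · rwa [closure_ball (0 : ℂ) one_ne_zero]
  · simpa [frontier_ball (0 : ℂ) one_ne_zero] using hw
  · simpa [closure_ball (0 : ℂ) one_ne_zero] using hz

lemma norm_le_of_forall_torus_norm_le {f : ℂ × ℂ → ℂ} {M : ℝ}
    (hf : DifferentiableOn ℂ f (closedBall 0 1 ×ˢ closedBall 0 1))
    (hM : ∀ z1 z2 : ℂ, ‖z1‖ = 1 → ‖z2‖ = 1 → ‖f (z1, z2)‖ ≤ M)
    {z1 z2 : ℂ} (h1 : ‖z1‖ ≤ 1) (h2 : ‖z2‖ ≤ 1) : ‖f (z1, z2)‖ ≤ M := by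
  have slice₁ {w : ℂ} (hw : ‖w‖ ≤ 1) : DifferentiableOn ℂ (fun z => f (z, w)) (closedBall 0 1) :=
    hf.comp (differentiableOn_id.prodMk (differentiableOn_const w))
      fun z hz => ⟨hz, by simpa using hw⟩
  have slice₂ {z : ℂ} (hz : ‖z‖ ≤ 1) : DifferentiableOn ℂ (fun w => f (z, w)) (closedBall 0 1) :=
    hf.comp ((differentiableOn_const z).prodMk differentiableOn_id)
      fun w hw => ⟨by simpa using hz, hw⟩
  refine norm_le_of_forall_norm_eq_one_norm_le (slice₁ h2) (fun z hz => ?_) h1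
  exact norm_le_of_forall_norm_eq_one_norm_le (slice₂ hz.le) (hM z · hz) h2

lemma norm_lt_one_of_forall_torus_norm_lt_one {f : ℂ × ℂ → ℂ}
    (hf : DifferentiableOn ℂ f (closedBall 0 1 ×ˢ closedBall 0 1))
    (hlt : ∀ z1 z2 : ℂ, ‖z1‖ = 1 → ‖z2‖ = 1 → ‖f (z1, z2)‖ < 1)
    {z1 z2 : ℂ} (h1 : ‖z1‖ ≤ 1) (h2 : ‖z2‖ ≤ 1) : ‖f (z1, z2)‖ < 1 := by
  have htorus : sphere (0 : ℂ) 1 ×ˢ sphere (0 : ℂ) 1 ⊆ closedBall 0 1 ×ˢ closedBall 0 1 :=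
    Set.prod_mono sphere_subset_closedBall sphere_subset_closedBall
  obtain ⟨w, ⟨hw1, hw2⟩, hmax⟩ := ((isCompact_sphere 0 1).prod (isCompact_sphere 0 1)).exists_isMaxOn
    ⟨(1, 1), by simp, by simp⟩ (hf.continuousOn.mono htorus).norm
  refine (norm_le_of_forall_torus_norm_le hf (fun z1 z2 hz1 hz2 => ?_) h1 h2).trans_lt
    (hlt w.1 w.2 (by simpa using hw1) (by simpa using hw2))
  exact hmax (show (z1, z2) ∈ _ from ⟨by simpa using hz1, by simpa using hz2⟩)

lemma norm_eval_lt_norm_eval_of_torus {q r : MvPolynomial (Fin 2) ℂ}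
    (hr : ∀ z1 z2 : ℂ, ‖z1‖ ≤ 1 → ‖z2‖ ≤ 1 → eval ![z1, z2] r ≠ 0)
    (hlt : ∀ z1 z2 : ℂ, ‖z1‖ = 1 → ‖z2‖ = 1 → ‖eval ![z1, z2] q‖ < ‖eval ![z1, z2] r‖)
    {z1 z2 : ℂ} (h1 : ‖z1‖ ≤ 1) (h2 : ‖z2‖ ≤ 1) : ‖eval ![z1, z2] q‖ < ‖eval ![z1, z2] r‖ := by
  have hr' : ∀ w ∈ closedBall (0 : ℂ) 1 ×ˢ closedBall (0 : ℂ) 1, eval ![w.1, w.2] r ≠ 0 :=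
    fun w hw => hr w.1 w.2 (by simpa using hw.1) (by simpa using hw.2)
  have hdiff : DifferentiableOn ℂ (fun w : ℂ × ℂ => eval ![w.1, w.2] q * (eval ![w.1, w.2] r)⁻¹)
      (closedBall 0 1 ×ˢ closedBall 0 1) :=
    (differentiable_eval_pair q).differentiableOn.mul
      ((differentiable_eval_pair r).differentiableOn.inv hr')
  have := norm_lt_one_of_forall_torus_norm_lt_one hdiff (fun w1 w2 hw1 hw2 => ?_) h1 h2
  · rwa [← div_eq_mul_inv, norm_div, div_lt_one (norm_pos_iff.2 (hr z1 z2 h1 h2))] at this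
  · rw [← div_eq_mul_inv, norm_div, div_lt_one (norm_pos_iff.2 (hr w1 w2 hw1.le hw2.le))]
    exact hlt w1 w2 hw1 hw2

/-- `a V` at a point of the torus, where each reflection is `q̃ = S q̄` with `S = z₁ z₂`. -/
def kummertMatrix (A B E F S : ℂ) : Matrix (Fin 3) (Fin 3) ℂ :=
  !![S * conj B, S * conj E, S * conj F;
     E, (E * (S * conj E) - A * (S * conj A + B)) / (A + S * conj B),
        (E * (S * conj F)) / (A + S * conj B);
     F, (F * (S * conj E)) / (A + S * conj B),
        (F * (S * conj F) - A * (S * conj A + B)) / (A + S * conj B)]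

lemma conjTranspose_kummertMatrix_mul_self {A B E F S : ℂ} (hS : ‖S‖ = 1)
    (hd : A + S * conj B ≠ 0)
    (h : E * conj E + F * conj F = A * conj A - B * conj B) :
    (kummertMatrix A B E F S)ᴴ * kummertMatrix A B E F S = (A * conj A) • 1 := by
  have hS0 : S ≠ 0 := norm_ne_zero_iff.1 (by simp [hS])
  have hconj : conj S = S⁻¹ := (inv_eq_conj hS).symm
  have hc : S * conj A + B ≠ 0 := by
    have := mul_ne_zero hS0 ((map_ne_zero (starRingEnd ℂ)).2 hd)
    simpa [hconj, mul_add, hS0] using this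
  ext i j
  fin_cases i <;> fin_cases j <;>
    simp only [kummertMatrix, Matrix.mul_apply, Fin.sum_univ_three, Matrix.conjTranspose_apply,
      Matrix.of_apply, Matrix.cons_val', Matrix.cons_val, Matrix.cons_val_zero,
      Matrix.cons_val_one, Matrix.cons_val_fin_one, Matrix.smul_apply, Matrix.one_apply_eq,
      Matrix.one_apply_ne, ne_eq, Fin.reduceEq, not_false_eq_true, RCLike.star_def, map_add,
      map_sub, map_mul, map_div₀, conj_conj, hconj, smul_eq_mul, mul_one, mul_zero, Fin.mk_one,
      Fin.zero_eta, Fin.reduceFinMk, Fin.isValue] <;>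
    field_simp
  · linear_combination h
  · linear_combination S * conj E * h
  · linear_combination S * conj F * h
  · linear_combination E * h
  · linear_combination S * E * conj E * h
  · linear_combination S * E * conj F * h
  · linear_combination F * h
  · linear_combination S * F * conj E * h
  · linear_combination S * F * conj F * h

lemma inv_smul_kummertMatrix_mem_unitaryGroup {A B E F S : ℂ} (hA : A ≠ 0) (hS : ‖S‖ = 1)
    (hd : A + S * conj B ≠ 0) (h : ‖E‖ ^ 2 + ‖F‖ ^ 2 = ‖A‖ ^ 2 - ‖B‖ ^ 2) :
    A⁻¹ • kummertMatrix A B E F S ∈ Matrix.unitaryGroup (Fin 3) ℂ := by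
  have h' : E * conj E + F * conj F = A * conj A - B * conj B := by
    simp only [mul_conj, normSq_eq_norm_sq]
    exact_mod_cast h
  rw [Matrix.mem_unitaryGroup_iff', star_smul, Matrix.smul_mul, Matrix.mul_smul,
    Matrix.star_eq_conjTranspose, conjTranspose_kummertMatrix_mul_self hS hd h', smul_smul,
    smul_smul]
  have : conj A ≠ 0 := (map_ne_zero _).2 hA
  convert one_smul ℂ (1 : Matrix (Fin 3) (Fin 3) ℂ)
  simp only [RCLike.star_def, map_inv₀]
  field_simp

theorem stmt19_general (p : MvPolynomial (Fin 3) ℂ)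
    (a b a' bt E1 E2 Et1 Et2 : MvPolynomial (Fin 2) ℂ)
    (hst : IsStable p)
    (hp : ∀ z : Fin 3 → ℂ,
      eval z p = eval ![z 0, z 1] a + eval ![z 0, z 1] b * z 2)
    (hat : IsReflection2 a a') (hbt : IsReflection2 b bt)
    (hE : ∀ z1 z2 : ℂ, ‖z1‖ = 1 → ‖z2‖ = 1 →
      ‖eval ![z1, z2] E1‖ ^ 2 + ‖eval ![z1, z2] E2‖ ^ 2 =
        ‖eval ![z1, z2] a‖ ^ 2 - ‖eval ![z1, z2] b‖ ^ 2)
    (hEt1 : IsReflection2 E1 Et1) (hEt2 : IsReflection2 E2 Et2)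
    (V : ℂ → ℂ → Matrix (Fin 3) (Fin 3) ℂ)
    (hV : ∀ z1 z2 : ℂ, V z1 z2 =
      (eval ![z1, z2] a)⁻¹ •
        !![eval ![z1, z2] bt, eval ![z1, z2] Et1, eval ![z1, z2] Et2;
           eval ![z1, z2] E1,
             (eval ![z1, z2] E1 * eval ![z1, z2] Et1 -
                 eval ![z1, z2] a * (eval ![z1, z2] a' + eval ![z1, z2] b)) /
               (eval ![z1, z2] a + eval ![z1, z2] bt),
             (eval ![z1, z2] E1 * eval ![z1, z2] Et2) /
               (eval ![z1, z2] a + eval ![z1, z2] bt);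
           eval ![z1, z2] E2,
             (eval ![z1, z2] E2 * eval ![z1, z2] Et1) /
               (eval ![z1, z2] a + eval ![z1, z2] bt),
             (eval ![z1, z2] E2 * eval ![z1, z2] Et2 -
                 eval ![z1, z2] a * (eval ![z1, z2] a' + eval ![z1, z2] b)) /
               (eval ![z1, z2] a + eval ![z1, z2] bt)]) :
    (∀ i j : Fin 3, DifferentiableOn ℂ (fun w : ℂ × ℂ => V w.1 w.2 i j)
        {w : ℂ × ℂ | ‖w.1‖ < 1 ∧ ‖w.2‖ < 1}) ∧
    (∀ z1 z2 : ℂ, ‖z1‖ = 1 → ‖z2‖ = 1 →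
      V z1 z2 ∈ Matrix.unitaryGroup (Fin 3) ℂ) := by
  have hba : ∀ z1 z2 : ℂ, ‖z1‖ ≤ 1 → ‖z2‖ ≤ 1 → ‖eval ![z1, z2] b‖ < ‖eval ![z1, z2] a‖ :=
    fun _ _ => hst.norm_eval_lt_norm_eval hp
  have ha : ∀ z1 z2 : ℂ, ‖z1‖ ≤ 1 → ‖z2‖ ≤ 1 → eval ![z1, z2] a ≠ 0 :=
    fun z1 z2 h1 h2 => norm_pos_iff.1 ((norm_nonneg _).trans_lt (hba z1 z2 h1 h2))
  have hbta : ∀ z1 z2 : ℂ, ‖z1‖ ≤ 1 → ‖z2‖ ≤ 1 → ‖eval ![z1, z2] bt‖ < ‖eval ![z1, z2] a‖ :=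
    fun z1 z2 => norm_eval_lt_norm_eval_of_torus ha fun w1 w2 hw1 hw2 => by
      simpa [hbt.eval_eq_of_norm_eq_one hw1 hw2, hw1, hw2] using hba w1 w2 hw1.le hw2.le
  have hd : ∀ z1 z2 : ℂ, ‖z1‖ ≤ 1 → ‖z2‖ ≤ 1 → eval ![z1, z2] a + eval ![z1, z2] bt ≠ 0 :=
    fun z1 z2 h1 h2 h0 => by
      simpa [eq_neg_of_add_eq_zero_right h0] using hbta z1 z2 h1 h2
  refine ⟨fun i j => ?_, fun z1 z2 h1 h2 => ?_⟩
  · have hP (q : MvPolynomial (Fin 2) ℂ) := (differentiable_eval_pair q).differentiableOn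
      (s := {w : ℂ × ℂ | ‖w.1‖ < 1 ∧ ‖w.2‖ < 1})
    have hinv_a := (hP a).inv fun w hw => ha w.1 w.2 hw.1.le hw.2.le
    have hinv_d := ((hP a).add (hP bt)).inv fun w hw => hd w.1 w.2 hw.1.le hw.2.le
    fin_cases i <;> fin_cases j <;>
      simp only [hV, Matrix.smul_apply, Matrix.of_apply, Matrix.cons_val', Matrix.empty_val',
        Matrix.cons_val_fin_one, smul_eq_mul, div_eq_mul_inv] <;>
      apply_rules [DifferentiableOn.mul, DifferentiableOn.sub, DifferentiableOn.add]
  · rw [hV, hbt.eval_eq_of_norm_eq_one h1 h2, hat.eval_eq_of_norm_eq_one h1 h2,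
      hEt1.eval_eq_of_norm_eq_one h1 h2, hEt2.eval_eq_of_norm_eq_one h1 h2]
    have hd' := hd z1 z2 h1.le h2.le
    rw [hbt.eval_eq_of_norm_eq_one h1 h2] at hd'
    exact inv_smul_kummertMatrix_mem_unitaryGroup (ha z1 z2 h1.le h2.le) (by simp [h1, h2]) hd'
      (hE z1 z2 h1 h2)

/-- for a stable multi-affine `p = a + b z₃` and polynomials `E₁, E₂` of
degree at most one in each variable with `|E₁|² + |E₂|² = |a|² − |b|²` on `𝕋²`,
Kummert's matrix
`V = (1/a) [[b̃, Ẽᵗ], [E, (E Ẽᵗ − a(ã + b) I₂)/(a + b̃)]]`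
is holomorphic on the open bidisk and unitary-valued on `𝕋²`. -/
theorem stmt19 (p : MvPolynomial (Fin 3) ℂ)
    (a b a' bt E1 E2 Et1 Et2 : MvPolynomial (Fin 2) ℂ)
    (hma : ∀ i, p.degreeOf i ≤ 1) (hst : IsStable p)
    (hmaa : ∀ i, a.degreeOf i ≤ 1) (hmab : ∀ i, b.degreeOf i ≤ 1)
    (hp : ∀ z : Fin 3 → ℂ,
      eval z p = eval ![z 0, z 1] a + eval ![z 0, z 1] b * z 2)
    (hat : IsReflection2 a a') (hbt : IsReflection2 b bt)
    (hE1d : ∀ i, E1.degreeOf i ≤ 1) (hE2d : ∀ i, E2.degreeOf i ≤ 1)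
    (hE : ∀ z1 z2 : ℂ, ‖z1‖ = 1 → ‖z2‖ = 1 →
      ‖eval ![z1, z2] E1‖ ^ 2 + ‖eval ![z1, z2] E2‖ ^ 2 =
        ‖eval ![z1, z2] a‖ ^ 2 - ‖eval ![z1, z2] b‖ ^ 2)
    (hEt1 : IsReflection2 E1 Et1) (hEt2 : IsReflection2 E2 Et2)
    (V : ℂ → ℂ → Matrix (Fin 3) (Fin 3) ℂ)
    (hV : ∀ z1 z2 : ℂ, V z1 z2 =
      (eval ![z1, z2] a)⁻¹ •
        !![eval ![z1, z2] bt, eval ![z1, z2] Et1, eval ![z1, z2] Et2;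
           eval ![z1, z2] E1,
             (eval ![z1, z2] E1 * eval ![z1, z2] Et1 -
                 eval ![z1, z2] a * (eval ![z1, z2] a' + eval ![z1, z2] b)) /
               (eval ![z1, z2] a + eval ![z1, z2] bt),
             (eval ![z1, z2] E1 * eval ![z1, z2] Et2) /
               (eval ![z1, z2] a + eval ![z1, z2] bt);
           eval ![z1, z2] E2,
             (eval ![z1, z2] E2 * eval ![z1, z2] Et1) /
               (eval ![z1, z2] a + eval ![z1, z2] bt),
             (eval ![z1, z2] E2 * eval ![z1, z2] Et2 -
                 eval ![z1, z2] a * (eval ![z1, z2] a' + eval ![z1, z2] b)) /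
               (eval ![z1, z2] a + eval ![z1, z2] bt)]) :
    (∀ i j : Fin 3, DifferentiableOn ℂ (fun w : ℂ × ℂ => V w.1 w.2 i j)
        {w : ℂ × ℂ | ‖w.1‖ < 1 ∧ ‖w.2‖ < 1}) ∧
    (∀ z1 z2 : ℂ, ‖z1‖ = 1 → ‖z2‖ = 1 →
      V z1 z2 ∈ Matrix.unitaryGroup (Fin 3) ℂ) :=
  stmt19_general p a b a' bt E1 E2 Et1 Et2 hst hp hat hbt hE hEt1 hEt2 V hV
end
end
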